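/- Suppose block W is correct, i.e. |F ∩ W| ≤ f_W, and there exists a round t0 ≤ T_P such that for every correct u ∈ W and every round t ≥ t0: a(u,t) = 1 if and only if Ψ divides t − t0 (the block's strong Ψ-pulser has stabilised by round T_P). Assume Cw ≥ Ψ + 2. Then there exists a round t1 ≤ T_P + 2·Cw such that for every correct node v ∈ V and every round t ≥ t1: b(v,t) = 1 if and only if t = t1 + kΨ for some integer k ≥ 0. -/
import Mathlib


/-- Lemma: a correct block's pulses pass the filter.
Same setting as the filtering construction: a network on `V` with
`n = |V| > 3f` nodes, faulty set `F` with `|F| ≤ f`, and a block `W ⊆ V` with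
`|W| > 3 f_W`.  Correct nodes `u ∈ W` output pulser bits `a(u,t)`, every
correct `v ∈ V` computes `m`, `M`, a counter `ℓ(v,t) ∈ {0,…,Ψ}`, a cooldown
counter `w(v,t) ∈ {0,…,Cw}` and the acceptance bits `b(v,t)` by the stated
filtering recursions (round-1 values arbitrary within ranges).
If the block is correct (`|F ∩ W| ≤ f_W`), its strong `Ψ`-pulser has
stabilised by round `T_P`, and `Cw ≥ Ψ + 2`, then there is a round
`t1 ≤ T_P + 2·Cw` such that for every correct node `v` and every round
`t ≥ t1`: `b(v,t) = 1` iff `t = t1 + kΨ` for some `k ≥ 0`. -/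
theorem correct_block_fires {V : Type*} [Fintype V] [DecidableEq V]
    (F W : Finset V) (f fW Ψ TP Cw : ℕ)
    (hn : Fintype.card V > 3 * f) (hF : F.card ≤ f)
    (hnW : W.card > 3 * fW) (hWcorrect : (F ∩ W).card ≤ fW)
    (hΨ : 1 ≤ Ψ) (hTP : 1 ≤ TP) (hCw : Ψ + 2 ≤ Cw)
    (a : V → ℕ → ℕ) (arec : V → V → ℕ → ℕ)
    (m M ℓ w b : V → ℕ → ℕ) (mrec : V → V → ℕ → ℕ)
    -- the block's strong pulser has stabilised by round `TP`:
    (t0 : ℕ) (ht0l : 1 ≤ t0) (ht0u : t0 ≤ TP)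
    (hstab : ∀ u ∈ W, u ∉ F → ∀ t, t0 ≤ t → (a u t = 1 ↔ Ψ ∣ (t - t0)))
    (habits : ∀ u ∈ W, u ∉ F → ∀ t, a u t = 0 ∨ a u t = 1)
    -- received values agree with sent values for correct senders:
    (harec : ∀ v u, u ∈ W → u ∉ F → ∀ t, arec v u t = a u t)
    (hmrec : ∀ v u, u ∉ F → ∀ t, mrec v u t = m u t)
    -- computation of `m` and `M` at correct nodes:
    (hmbits : ∀ v, v ∉ F → ∀ t, m v t = 0 ∨ m v t = 1)
    (hm : ∀ v, v ∉ F → ∀ t, 1 ≤ t →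
      (m v (t + 1) = 1 ↔ W.card - fW ≤ (W.filter fun u => arec v u t = 1).card))
    (hMbits : ∀ v, v ∉ F → ∀ t, M v t = 0 ∨ M v t = 1)
    (hM : ∀ v, v ∉ F → ∀ t, 1 ≤ t →
      (M v (t + 1) = 1 ↔
        Fintype.card V - f ≤ (Finset.univ.filter fun u => mrec v u t = 1).card))
    -- the filtering recursions for `ℓ`, `w` and `b`:
    (hℓrange : ∀ v, v ∉ F → ∀ t, ℓ v t ≤ Ψ)
    (hℓ : ∀ v, v ∉ F → ∀ t, 1 ≤ t →
      ℓ v (t + 1) =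
        if f + 1 ≤ (Finset.univ.filter fun u => mrec v u t = 1).card then 0
        else min Ψ (ℓ v t + 1))
    (hwrange : ∀ v, v ∉ F → ∀ t, w v t ≤ Cw)
    (hw : ∀ v, v ∉ F → ∀ t, 1 ≤ t →
      w v (t + 1) =
        if (M v (t + 1) = 0 ∧ ℓ v (t + 1) = 0) ∨ (M v (t + 1) = 1 ∧ ℓ v t ≠ Ψ - 1)
        then Cw else w v t - 1)
    (hb : ∀ v, v ∉ F → ∀ t, b v t = if w v t = 0 ∧ M v t = 1 then 1 else 0) :
    ∃ t1, 1 ≤ t1 ∧ t1 ≤ TP + 2 * Cw ∧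
      ∀ v, v ∉ F → ∀ t, t1 ≤ t → (b v t = 1 ↔ ∃ k, t = t1 + k * Ψ) := by
  -- divisibility helpers
  have key1 : ∀ x : ℕ, x % Ψ = Ψ - 1 → Ψ ∣ (x + 1) := by
    intro x hx
    refine ⟨x / Ψ + 1, ?_⟩
    have h1 := Nat.div_add_mod x Ψ
    have h2 : Ψ * (x / Ψ + 1) = Ψ * (x / Ψ) + Ψ := by ring
    omega
  have key2 : ∀ x : ℕ, Ψ ∣ (x + 1) → x % Ψ = Ψ - 1 := by
    intro x hx
    obtain ⟨k, hk⟩ := hx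
    have hk1 : 1 ≤ k := by
      rcases Nat.eq_zero_or_pos k with h | h
      · subst h; simp at hk
      · exact h
    have h4 : Ψ ≤ Ψ * k := Nat.le_mul_of_pos_right Ψ hk1
    have h5 : Ψ * (k - 1) = Ψ * k - Ψ := by
      rw [Nat.mul_sub, Nat.mul_one]
    have h6 : x = Ψ - 1 + Ψ * (k - 1) := by omega
    rw [h6, Nat.add_mul_mod_self_left, Nat.mod_eq_of_lt (by omega)]
  -- card bounds
  have hWF : W.card - fW ≤ (W \ F).card := by
    have h1 : W \ F = W \ (W ∩ F) := by rw [Finset.sdiff_inter_self_left]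
    rw [h1, Finset.card_sdiff_of_subset Finset.inter_subset_left]
    have : (W ∩ F).card = (F ∩ W).card := by rw [Finset.inter_comm]
    omega
  have hVF : Fintype.card V - f ≤ (Finset.univ \ F).card := by
    rw [Finset.card_sdiff_of_subset (Finset.subset_univ F), Finset.card_univ]
    omega
  -- value of m
  have hmval : ∀ v, v ∉ F → ∀ t, t0 + 1 ≤ t → (m v t = 1 ↔ Ψ ∣ (t - 1 - t0)) := by
    intro v hv t ht
    obtain ⟨s, rfl⟩ : ∃ s, t = s + 1 := ⟨t - 1, by omega⟩
    have hs : t0 ≤ s := by omega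
    have he : s + 1 - 1 - t0 = s - t0 := by omega
    rw [hm v hv s (by omega), he]
    constructor
    · intro hc
      by_contra hdiv
      have hsub : (W.filter fun u => arec v u s = 1) ⊆ W ∩ F := by
        intro u hu
        simp only [Finset.mem_filter] at hu
        obtain ⟨huW, hua⟩ := hu
        refine Finset.mem_inter.mpr ⟨huW, ?_⟩
        by_contra huF
        rw [harec v u huW huF s] at hua
        exact hdiv ((hstab u huW huF s hs).mp hua)
      have h1 := Finset.card_le_card hsub
      have h2 : (W ∩ F).card = (F ∩ W).card := by rw [Finset.inter_comm]
      omega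
    · intro hdiv
      have hsub : W \ F ⊆ W.filter fun u => arec v u s = 1 := by
        intro u hu
        simp only [Finset.mem_sdiff] at hu
        obtain ⟨huW, huF⟩ := hu
        refine Finset.mem_filter.mpr ⟨huW, ?_⟩
        rw [harec v u huW huF s]
        exact (hstab u huW huF s hs).mpr hdiv
      have h1 := Finset.card_le_card hsub
      omega
  -- counts of m-senders
  have hcnt : ∀ v (t : ℕ), t0 + 1 ≤ t →
      (Ψ ∣ (t - 1 - t0) →
        Fintype.card V - f ≤ (Finset.univ.filter fun u => mrec v u t = 1).card) ∧
      (¬ Ψ ∣ (t - 1 - t0) →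
        (Finset.univ.filter fun u => mrec v u t = 1).card ≤ f) := by
    intro v t ht
    constructor
    · intro hdiv
      have hsub : Finset.univ \ F ⊆ Finset.univ.filter fun u => mrec v u t = 1 := by
        intro u hu
        simp only [Finset.mem_sdiff, Finset.mem_univ, true_and] at hu
        refine Finset.mem_filter.mpr ⟨Finset.mem_univ u, ?_⟩
        rw [hmrec v u hu t]
        exact (hmval u hu t ht).mpr hdiv
      have h1 := Finset.card_le_card hsub
      omega
    · intro hdiv
      have hsub : (Finset.univ.filter fun u => mrec v u t = 1) ⊆ F := by
        intro u hu
        simp only [Finset.mem_filter, Finset.mem_univ, true_and] at hu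
        by_contra huF
        rw [hmrec v u huF t] at hu
        exact hdiv ((hmval u huF t ht).mp hu)
      have h1 := Finset.card_le_card hsub
      omega
  -- value of M
  have hMval : ∀ v, v ∉ F → ∀ t, t0 + 2 ≤ t → (M v t = 1 ↔ Ψ ∣ (t - (t0 + 2))) := by
    intro v hv t ht
    obtain ⟨s, rfl⟩ : ∃ s, t = s + 1 := ⟨t - 1, by omega⟩
    have hs : t0 + 1 ≤ s := by omega
    have he : s + 1 - (t0 + 2) = s - 1 - t0 := by omega
    rw [hM v hv s (by omega), he]
    obtain ⟨hhi, hlo⟩ := hcnt v s hs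
    constructor
    · intro hc
      by_contra hdiv
      have := hlo hdiv
      omega
    · intro hdiv
      exact hhi hdiv
  -- value of ℓ
  have hℓval : ∀ v, v ∉ F → ∀ t, t0 + 2 ≤ t → ℓ v t = (t - (t0 + 2)) % Ψ := by
    intro v hv t ht
    induction t, ht using Nat.le_induction with
    | base =>
      have h := hℓ v hv (t0 + 1) (by omega)
      have hdiv : Ψ ∣ (t0 + 1 - 1 - t0) := by
        have h0 : t0 + 1 - 1 - t0 = 0 := by omega
        rw [h0]
        exact dvd_zero Ψ
      have hhi := (hcnt v (t0 + 1) le_rfl).1 hdiv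
      have he : t0 + 1 + 1 = t0 + 2 := by omega
      rw [he] at h
      rw [h, if_pos (by omega)]
      simp
    | succ t ht ih =>
      have h := hℓ v hv t (by omega)
      by_cases hdiv : Ψ ∣ (t - 1 - t0)
      · have hhi := (hcnt v t (by omega)).1 hdiv
        rw [h, if_pos (by omega)]
        have he : t + 1 - (t0 + 2) = t - 1 - t0 := by omega
        rw [he]
        obtain ⟨k, hk⟩ := hdiv
        rw [hk, Nat.mul_mod_right]
      · have hlo := (hcnt v t (by omega)).2 hdiv
        rw [h, if_neg (by omega), ih]
        have hx1 : t - 1 - t0 = (t - (t0 + 2)) + 1 := by omega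
        rw [hx1] at hdiv
        have hr : (t - (t0 + 2)) % Ψ < Ψ := Nat.mod_lt _ (by omega)
        have hne : (t - (t0 + 2)) % Ψ ≠ Ψ - 1 := fun hc => hdiv (key1 _ hc)
        have h2 : 1 < Ψ := by omega
        have he : t + 1 - (t0 + 2) = (t - (t0 + 2)) + 1 := by omega
        have hgoal : ((t - (t0 + 2)) + 1) % Ψ = (t - (t0 + 2)) % Ψ + 1 := by
          rw [Nat.add_mod, Nat.mod_eq_of_lt h2, Nat.mod_eq_of_lt (by omega)]
        rw [he, hgoal]
        omega
  -- w decreases after stabilisation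
  have hwstep : ∀ v, v ∉ F → ∀ t, t0 + 2 ≤ t → w v (t + 1) = w v t - 1 := by
    intro v hv t ht
    have hcond : ¬ ((M v (t + 1) = 0 ∧ ℓ v (t + 1) = 0) ∨
        (M v (t + 1) = 1 ∧ ℓ v t ≠ Ψ - 1)) := by
      rintro (⟨hM0, hℓ0⟩ | ⟨hM1, hℓne⟩)
      · have h1 := hℓval v hv (t + 1) (by omega)
        rw [h1] at hℓ0
        have hdvd : Ψ ∣ (t + 1 - (t0 + 2)) := Nat.dvd_of_mod_eq_zero hℓ0
        have := (hMval v hv (t + 1) (by omega)).mpr hdvd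
        omega
      · have hdvd := (hMval v hv (t + 1) (by omega)).mp hM1
        have hx : t + 1 - (t0 + 2) = (t - (t0 + 2)) + 1 := by omega
        rw [hx] at hdvd
        have h1 := key2 _ hdvd
        rw [hℓval v hv t (by omega)] at hℓne
        exact hℓne h1
    rw [hw v hv t (by omega), if_neg hcond]
  have hwzero : ∀ v, v ∉ F → ∀ t, t0 + 2 + Cw ≤ t → w v t = 0 := by
    intro v hv t ht
    have key : ∀ d, w v (t0 + 2 + d) ≤ Cw - d := by
      intro d
      induction d with
      | zero => simpa using hwrange v hv (t0 + 2)
      | succ d ih =>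
        have h1 := hwstep v hv (t0 + 2 + d) (by omega)
        have he : t0 + 2 + (d + 1) = (t0 + 2 + d) + 1 := by omega
        rw [he, h1]
        omega
    have h2 := key (t - (t0 + 2))
    have he : t0 + 2 + (t - (t0 + 2)) = t := by omega
    rw [he] at h2
    omega
  -- value of b
  have hbval : ∀ v, v ∉ F → ∀ t, t0 + 2 + Cw ≤ t → (b v t = 1 ↔ Ψ ∣ (t - (t0 + 2))) := by
    intro v hv t ht
    have hw0 := hwzero v hv t ht
    have hMv := hMval v hv t (by omega)
    rw [hb v hv t]
    constructor
    · intro h1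
      by_contra hdiv
      have hc : ¬ (w v t = 0 ∧ M v t = 1) := fun hc => hdiv (hMv.mp hc.2)
      rw [if_neg hc] at h1
      exact one_ne_zero h1.symm
    · intro hdiv
      rw [if_pos ⟨hw0, hMv.mpr hdiv⟩]
  -- choose t1
  have hP1 : Ψ * ((Cw + Ψ - 1) / Ψ) ≤ Cw + Ψ - 1 := Nat.mul_div_le _ _
  have hP2 : Cw ≤ Ψ * ((Cw + Ψ - 1) / Ψ) := by
    have h1 := Nat.div_add_mod (Cw + Ψ - 1) Ψ
    have h2 : (Cw + Ψ - 1) % Ψ < Ψ := Nat.mod_lt _ (by omega)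
    omega
  have hPdvd : Ψ ∣ Ψ * ((Cw + Ψ - 1) / Ψ) := Dvd.intro _ rfl
  refine ⟨t0 + 2 + Ψ * ((Cw + Ψ - 1) / Ψ), by omega, by omega, ?_⟩
  intro v hv t ht
  rw [hbval v hv t (by omega)]
  constructor
  · intro hdvd
    have h3 := Nat.dvd_sub hdvd hPdvd
    have h4 : t - (t0 + 2) - Ψ * ((Cw + Ψ - 1) / Ψ) =
        t - (t0 + 2 + Ψ * ((Cw + Ψ - 1) / Ψ)) := by omega
    rw [h4] at h3
    obtain ⟨k, hk⟩ := h3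
    refine ⟨k, ?_⟩
    have h5 : Ψ * k = k * Ψ := mul_comm Ψ k
    omega
  · rintro ⟨k, rfl⟩
    have h5 : t0 + 2 + Ψ * ((Cw + Ψ - 1) / Ψ) + k * Ψ - (t0 + 2) =
        Ψ * ((Cw + Ψ - 1) / Ψ) + k * Ψ := by omega
    rw [h5]
    exact dvd_add hPdvd (dvd_mul_left Ψ k)
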